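/- arXiv:1905.11400 — 4 statements merged into one kernel-verified Lean document; each statement's English description precedes it below -/
import Mathlib

section
/- For the recurrence with q_0 = 0, p_0 = 1 and q_k = q_{k-1} + h_k p_{k-1}, p_k = -z g_k q_{k-1} + p_{k-1}, the coefficient of (-z)^l in p_k equals the sum over pairs of interlacing multi-indices I, J ⊆ {1,…,k} with |I| = |J| = l and i_1 < j_1 < i_2 < j_2 < … < i_l < j_l of the products h_I g_J, where h_I = ∏_{i∈I} h_i and g_J = ∏_{j∈J} g_j; in particular p_k(0) = 1. -/
open Polynomial Finset

private lemma snocStrictMono {m k : ℕ} {f : Fin m → ℕ} (hmono : StrictMono f)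
    (hle : ∀ a, f a ≤ k) : StrictMono (Fin.snoc f (k+1) : Fin (m+1) → ℕ) := by
  intro a b hab
  rcases Fin.eq_castSucc_or_eq_last b with ⟨b', rfl⟩ | rfl
  · rcases Fin.eq_castSucc_or_eq_last a with ⟨a', rfl⟩ | rfl
    · simp only [Fin.snoc_castSucc]
      exact hmono (by exact_mod_cast Fin.castSucc_lt_castSucc_iff.mp hab)
    · exact absurd hab (Fin.castSucc_lt_last b').asymm
  · rcases Fin.eq_castSucc_or_eq_last a with ⟨a', rfl⟩ | rfl
    · simp only [Fin.snoc_castSucc, Fin.snoc_last]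
      exact Nat.lt_succ_of_le (hle a')
    · exact absurd hab (lt_irrefl _)

/-- If `S` consists of `J` (all elements `≤ k`) together with `k+1`, then the order
embedding of `S` is `Fin.snoc` of the one of `J`. -/
private lemma emb_snoc {k m : ℕ} {J S : Finset ℕ} (hJ : J.card = m) (hS : S.card = m+1)
    (hsub : J ⊆ S) (hmem : k+1 ∈ S) (hle : ∀ x ∈ J, x ≤ k) (a : Fin (m+1)) :
    S.orderEmbOfFin hS a = (Fin.snoc (J.orderEmbOfFin hJ) (k+1) : Fin (m+1) → ℕ) a := by
  have h := Finset.orderEmbOfFin_unique hS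
      (f := (Fin.snoc (J.orderEmbOfFin hJ) (k+1) : Fin (m+1) → ℕ)) ?_ ?_
  · exact (congrFun h a).symm
  · intro x
    rcases Fin.eq_castSucc_or_eq_last x with ⟨x', rfl⟩ | rfl
    · simpa using hsub (Finset.orderEmbOfFin_mem J hJ x')
    · simpa using hmem
  · exact snocStrictMono (J.orderEmbOfFin hJ).strictMono
      (fun a => hle _ (Finset.orderEmbOfFin_mem J hJ a))

open scoped Classical in
noncomputable def PPset (k l : ℕ) : Finset (Finset ℕ × Finset ℕ) :=
  ((Finset.Icc 1 k).powerset ×ˢ (Finset.Icc 1 k).powerset).filter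
    (fun IJ => ∃ (hI : IJ.1.card = l) (hJ : IJ.2.card = l),
      (∀ a : Fin l, IJ.1.orderEmbOfFin hI a < IJ.2.orderEmbOfFin hJ a) ∧
      (∀ a b : Fin l, (a : ℕ) + 1 = (b : ℕ) →
        IJ.2.orderEmbOfFin hJ a < IJ.1.orderEmbOfFin hI b))

open scoped Classical in
noncomputable def QQset (k l : ℕ) : Finset (Finset ℕ × Finset ℕ) :=
  ((Finset.Icc 1 k).powerset ×ˢ (Finset.Icc 1 k).powerset).filter
    (fun IJ => ∃ (hI : IJ.1.card = l + 1) (hJ : IJ.2.card = l),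
      (∀ a : Fin l, IJ.1.orderEmbOfFin hI a.castSucc < IJ.2.orderEmbOfFin hJ a) ∧
      (∀ a : Fin l, IJ.2.orderEmbOfFin hJ a < IJ.1.orderEmbOfFin hI a.succ))

noncomputable def wt (g h : ℕ → ℝ) (IJ : Finset ℕ × Finset ℕ) : ℝ :=
  (∏ i ∈ IJ.1, h i) * (∏ j ∈ IJ.2, g j)

open scoped Classical in
private lemma mem_PPset {k l : ℕ} {IJ : Finset ℕ × Finset ℕ} :
    IJ ∈ PPset k l ↔ (IJ.1 ⊆ Finset.Icc 1 k ∧ IJ.2 ⊆ Finset.Icc 1 k) ∧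
      ∃ (hI : IJ.1.card = l) (hJ : IJ.2.card = l),
      (∀ a : Fin l, IJ.1.orderEmbOfFin hI a < IJ.2.orderEmbOfFin hJ a) ∧
      (∀ a b : Fin l, (a : ℕ) + 1 = (b : ℕ) →
        IJ.2.orderEmbOfFin hJ a < IJ.1.orderEmbOfFin hI b) := by
  simp [PPset, Finset.mem_filter, Finset.mem_product, and_assoc]

open scoped Classical in
private lemma mem_QQset {k l : ℕ} {IJ : Finset ℕ × Finset ℕ} :
    IJ ∈ QQset k l ↔ (IJ.1 ⊆ Finset.Icc 1 k ∧ IJ.2 ⊆ Finset.Icc 1 k) ∧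
      ∃ (hI : IJ.1.card = l + 1) (hJ : IJ.2.card = l),
      (∀ a : Fin l, IJ.1.orderEmbOfFin hI a.castSucc < IJ.2.orderEmbOfFin hJ a) ∧
      (∀ a : Fin l, IJ.2.orderEmbOfFin hJ a < IJ.1.orderEmbOfFin hI a.succ) := by
  simp [QQset, Finset.mem_filter, Finset.mem_product, and_assoc]

private lemma PPset_zero (k : ℕ) : PPset k 0 = {(∅, ∅)} := by
  ext IJ
  simp only [mem_PPset, Finset.card_eq_zero, Finset.mem_singleton, Prod.ext_iff]
  constructor
  · rintro ⟨-, h1, h2, -⟩; exact ⟨h1, h2⟩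
  · rintro ⟨h1, h2⟩
    refine ⟨⟨by simp [h1], by simp [h2]⟩, h1, h2, fun a => a.elim0, fun a => a.elim0⟩

private lemma PPset_base (l : ℕ) : PPset 0 (l+1) = ∅ := by
  ext IJ
  simp only [mem_PPset, Finset.notMem_empty, iff_false, not_and]
  rintro ⟨hI, hJ⟩ ⟨hcI, -⟩
  rw [show Finset.Icc 1 0 = (∅ : Finset ℕ) by simp, Finset.subset_empty] at hI
  simp [hI] at hcI

private lemma QQset_base (l : ℕ) : QQset 0 l = ∅ := by
  ext IJ
  simp only [mem_QQset, Finset.notMem_empty, iff_false, not_and]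
  rintro ⟨hI, hJ⟩ ⟨hcI, -⟩
  rw [show Finset.Icc 1 0 = (∅ : Finset ℕ) by simp, Finset.subset_empty] at hI
  simp [hI] at hcI

private lemma exists_emb {l : ℕ} {I : Finset ℕ} (hI : I.card = l) {x : ℕ} (hx : x ∈ I) :
    ∃ a : Fin l, I.orderEmbOfFin hI a = x := by
  have h := Finset.range_orderEmbOfFin I hI
  exact Set.mem_range.mp (h ▸ (Finset.mem_coe.mpr hx))

open scoped Classical in
private lemma sum_PPset_succ (g h : ℕ → ℝ) (k m : ℕ) :
    ∑ IJ ∈ PPset (k+1) (m+1), wt g h IJ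
      = (∑ IJ ∈ PPset k (m+1), wt g h IJ) + g (k+1) * ∑ IJ ∈ QQset k m, wt g h IJ := by
  have hsplit := Finset.sum_filter_add_sum_filter_not (PPset (k+1) (m+1))
    (fun IJ => (k+1) ∈ IJ.2) (wt g h)
  have hA : (PPset (k+1) (m+1)).filter (fun IJ => ¬ (k+1) ∈ IJ.2) = PPset k (m+1) := by
    ext ⟨I, J⟩
    simp only [Finset.mem_filter, mem_PPset]
    constructor
    · rintro ⟨⟨⟨hIsub, hJsub⟩, hcI, hcJ, c1, c2⟩, hnot⟩
      have hJk : ∀ x ∈ J, x ≤ k := by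
        intro x hx
        have h1 := (Finset.mem_Icc.mp (hJsub hx)).2
        have h2 : x ≠ k+1 := fun e => hnot (e ▸ hx)
        omega
      have hIk : ∀ x ∈ I, x ≤ k := by
        intro x hx
        obtain ⟨a, rfl⟩ := exists_emb hcI hx
        have h1 := c1 a
        have h2 := hJk _ (Finset.orderEmbOfFin_mem J hcJ a)
        omega
      exact ⟨⟨fun x hx => Finset.mem_Icc.mpr ⟨(Finset.mem_Icc.mp (hIsub hx)).1, hIk x hx⟩,
              fun x hx => Finset.mem_Icc.mpr ⟨(Finset.mem_Icc.mp (hJsub hx)).1, hJk x hx⟩⟩,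
             hcI, hcJ, c1, c2⟩
    · rintro ⟨⟨hIsub, hJsub⟩, rest⟩
      have hmono : Finset.Icc 1 k ⊆ Finset.Icc 1 (k+1) := Finset.Icc_subset_Icc_right (by omega)
      exact ⟨⟨⟨hIsub.trans hmono, hJsub.trans hmono⟩, rest⟩, fun hmem => by
        have := (Finset.mem_Icc.mp (hJsub hmem)).2; omega⟩
  have hB : ∑ IJ ∈ (PPset (k+1) (m+1)).filter (fun IJ => (k+1) ∈ IJ.2), wt g h IJ
      = g (k+1) * ∑ IJ ∈ QQset k m, wt g h IJ := by
    rw [Finset.mul_sum]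
    refine Finset.sum_bij' (fun IJ _ => (IJ.1, IJ.2.erase (k+1)))
      (fun IJ _ => (IJ.1, insert (k+1) IJ.2)) ?_ ?_ ?_ ?_ ?_
    · rintro ⟨I, J⟩ hmem
      dsimp only
      rw [Finset.mem_filter, mem_PPset] at hmem
      obtain ⟨⟨⟨hIsub, hJsub⟩, hcI, hcJ, c1, c2⟩, hJ1⟩ := hmem
      dsimp only at hIsub hJsub hcI hcJ c1 c2 hJ1
      have hcJ' : (J.erase (k+1)).card = m := by
        rw [Finset.card_erase_of_mem hJ1, hcJ]
        omega
      have hJk : ∀ x ∈ J.erase (k+1), x ≤ k := by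
        intro x hx
        have h1 := (Finset.mem_Icc.mp (hJsub (Finset.mem_of_mem_erase hx))).2
        have h2 := Finset.ne_of_mem_erase hx
        omega
      have key := emb_snoc hcJ' hcJ (Finset.erase_subset _ _) hJ1 hJk
      have hIk : ∀ x ∈ I, x ≤ k := by
        intro x hx
        obtain ⟨a, rfl⟩ := exists_emb hcI hx
        have h1 := c1 a
        have h2 := (Finset.mem_Icc.mp (hJsub (Finset.orderEmbOfFin_mem J hcJ a))).2
        omega
      rw [mem_QQset]
      refine ⟨⟨fun x hx => Finset.mem_Icc.mpr ⟨(Finset.mem_Icc.mp (hIsub hx)).1, hIk x hx⟩,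
              fun x hx => Finset.mem_Icc.mpr
                ⟨(Finset.mem_Icc.mp (hJsub (Finset.mem_of_mem_erase hx))).1, hJk x hx⟩⟩,
             hcI, hcJ', ?_, ?_⟩
      · intro a
        have h1 := c1 a.castSucc
        rw [key a.castSucc] at h1
        simpa using h1
      · intro a
        have h1 := c2 a.castSucc a.succ (by simp)
        rw [key a.castSucc] at h1
        simpa using h1
    · rintro ⟨I, J⟩ hmem
      dsimp only
      rw [mem_QQset] at hmem
      obtain ⟨⟨hIsub, hJsub⟩, hcI, hcJ, c1, c2⟩ := hmem
      dsimp only at hIsub hJsub hcI hcJ c1 c2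
      have hnot : k+1 ∉ J := fun hx => by
        have := (Finset.mem_Icc.mp (hJsub hx)).2; omega
      have hcJ' : (insert (k+1) J).card = m + 1 := by
        rw [Finset.card_insert_of_notMem hnot, hcJ]
      have key := emb_snoc hcJ hcJ' (Finset.subset_insert _ _) (Finset.mem_insert_self _ _)
        (fun x hx => (Finset.mem_Icc.mp (hJsub hx)).2)
      have hmono : Finset.Icc 1 k ⊆ Finset.Icc 1 (k+1) := Finset.Icc_subset_Icc_right (by omega)
      rw [Finset.mem_filter, mem_PPset]
      refine ⟨⟨⟨hIsub.trans hmono, Finset.insert_subset (Finset.mem_Icc.mpr (by omega))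
              (hJsub.trans hmono)⟩, hcI, hcJ', ?_, ?_⟩, Finset.mem_insert_self _ _⟩
      · intro a
        rw [key a]
        rcases Fin.eq_castSucc_or_eq_last a with ⟨a', rfl⟩ | rfl
        · simpa using c1 a'
        · simp only [Fin.snoc_last]
          have := (Finset.mem_Icc.mp (hIsub (Finset.orderEmbOfFin_mem I hcI (Fin.last m)))).2
          omega
      · intro a b hab
        rw [key a]
        have ha : (a : ℕ) < m := by have := b.isLt; omega
        have hae : a = Fin.castSucc ⟨(a : ℕ), ha⟩ := Fin.ext rfl
        have hbe : b = Fin.succ ⟨(a : ℕ), ha⟩ := Fin.ext (by simp; omega)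
        rw [hae, hbe, Fin.snoc_castSucc]
        exact c2 _
    · rintro ⟨I, J⟩ hmem
      dsimp only
      rw [Finset.mem_filter] at hmem
      exact Prod.ext rfl (Finset.insert_erase hmem.2)
    · rintro ⟨I, J⟩ hmem
      dsimp only
      rw [mem_QQset] at hmem
      have hnot : k+1 ∉ J := fun hx => by
        have := (Finset.mem_Icc.mp (hmem.1.2 hx)).2; omega
      exact Prod.ext rfl (Finset.erase_insert hnot)
    · rintro ⟨I, J⟩ hmem
      dsimp only
      rw [Finset.mem_filter] at hmem
      have := Finset.mul_prod_erase J g hmem.2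
      simp only [wt]
      rw [← this]
      ring
  rw [← hsplit, hB, hA]
  ring

open scoped Classical in
private lemma sum_QQset_succ (g h : ℕ → ℝ) (k l : ℕ) :
    ∑ IJ ∈ QQset (k+1) l, wt g h IJ
      = (∑ IJ ∈ QQset k l, wt g h IJ) + h (k+1) * ∑ IJ ∈ PPset k l, wt g h IJ := by
  have hsplit := Finset.sum_filter_add_sum_filter_not (QQset (k+1) l)
    (fun IJ => (k+1) ∈ IJ.1) (wt g h)
  have hA : (QQset (k+1) l).filter (fun IJ => ¬ (k+1) ∈ IJ.1) = QQset k l := by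
    ext ⟨I, J⟩
    simp only [Finset.mem_filter, mem_QQset]
    constructor
    · rintro ⟨⟨⟨hIsub, hJsub⟩, hcI, hcJ, c1, c2⟩, hnot⟩
      have hIk : ∀ x ∈ I, x ≤ k := by
        intro x hx
        have h1 := (Finset.mem_Icc.mp (hIsub hx)).2
        have h2 : x ≠ k+1 := fun e => hnot (e ▸ hx)
        omega
      have hJk : ∀ x ∈ J, x ≤ k := by
        intro x hx
        obtain ⟨a, rfl⟩ := exists_emb hcJ hx
        have h1 := c2 a
        have h2 := hIk _ (Finset.orderEmbOfFin_mem I hcI a.succ)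
        omega
      exact ⟨⟨fun x hx => Finset.mem_Icc.mpr ⟨(Finset.mem_Icc.mp (hIsub hx)).1, hIk x hx⟩,
              fun x hx => Finset.mem_Icc.mpr ⟨(Finset.mem_Icc.mp (hJsub hx)).1, hJk x hx⟩⟩,
             hcI, hcJ, c1, c2⟩
    · rintro ⟨⟨hIsub, hJsub⟩, rest⟩
      have hmono : Finset.Icc 1 k ⊆ Finset.Icc 1 (k+1) := Finset.Icc_subset_Icc_right (by omega)
      exact ⟨⟨⟨hIsub.trans hmono, hJsub.trans hmono⟩, rest⟩, fun hmem => by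
        have := (Finset.mem_Icc.mp (hIsub hmem)).2; omega⟩
  have hB : ∑ IJ ∈ (QQset (k+1) l).filter (fun IJ => (k+1) ∈ IJ.1), wt g h IJ
      = h (k+1) * ∑ IJ ∈ PPset k l, wt g h IJ := by
    rw [Finset.mul_sum]
    refine Finset.sum_bij' (fun IJ _ => (IJ.1.erase (k+1), IJ.2))
      (fun IJ _ => (insert (k+1) IJ.1, IJ.2)) ?_ ?_ ?_ ?_ ?_
    · rintro ⟨I, J⟩ hmem
      dsimp only
      rw [Finset.mem_filter, mem_QQset] at hmem
      obtain ⟨⟨⟨hIsub, hJsub⟩, hcI, hcJ, c1, c2⟩, hI1⟩ := hmem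
      dsimp only at hIsub hJsub hcI hcJ c1 c2 hI1
      have hcI' : (I.erase (k+1)).card = l := by
        rw [Finset.card_erase_of_mem hI1, hcI]
        omega
      have hIk : ∀ x ∈ I.erase (k+1), x ≤ k := by
        intro x hx
        have h1 := (Finset.mem_Icc.mp (hIsub (Finset.mem_of_mem_erase hx))).2
        have h2 := Finset.ne_of_mem_erase hx
        omega
      have key := emb_snoc hcI' hcI (Finset.erase_subset _ _) hI1 hIk
      have hJk : ∀ x ∈ J, x ≤ k := by
        intro x hx
        obtain ⟨a, rfl⟩ := exists_emb hcJ hx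
        have h1 := c2 a
        have h2 := (Finset.mem_Icc.mp (hIsub (Finset.orderEmbOfFin_mem I hcI a.succ))).2
        omega
      rw [mem_PPset]
      refine ⟨⟨fun x hx => Finset.mem_Icc.mpr
                ⟨(Finset.mem_Icc.mp (hIsub (Finset.mem_of_mem_erase hx))).1, hIk x hx⟩,
              fun x hx => Finset.mem_Icc.mpr ⟨(Finset.mem_Icc.mp (hJsub hx)).1, hJk x hx⟩⟩,
             hcI', hcJ, ?_, ?_⟩
      · intro a
        have h1 := c1 a
        rw [key a.castSucc] at h1
        simpa using h1
      · intro a b hab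
        have h1 := c2 a
        rw [show a.succ = Fin.castSucc b from Fin.ext (by simp; omega), key (Fin.castSucc b)] at h1
        simpa using h1
    · rintro ⟨I, J⟩ hmem
      dsimp only
      rw [mem_PPset] at hmem
      obtain ⟨⟨hIsub, hJsub⟩, hcI, hcJ, c1, c2⟩ := hmem
      dsimp only at hIsub hJsub hcI hcJ c1 c2
      have hnot : k+1 ∉ I := fun hx => by
        have := (Finset.mem_Icc.mp (hIsub hx)).2; omega
      have hcI' : (insert (k+1) I).card = l + 1 := by
        rw [Finset.card_insert_of_notMem hnot, hcI]
      have key := emb_snoc hcI hcI' (Finset.subset_insert _ _) (Finset.mem_insert_self _ _)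
        (fun x hx => (Finset.mem_Icc.mp (hIsub hx)).2)
      have hmono : Finset.Icc 1 k ⊆ Finset.Icc 1 (k+1) := Finset.Icc_subset_Icc_right (by omega)
      rw [Finset.mem_filter, mem_QQset]
      refine ⟨⟨⟨Finset.insert_subset (Finset.mem_Icc.mpr (by omega)) (hIsub.trans hmono),
              hJsub.trans hmono⟩, hcI', hcJ, ?_, ?_⟩, Finset.mem_insert_self _ _⟩
      · intro a
        rw [key a.castSucc, Fin.snoc_castSucc]
        exact c1 a
      · intro a
        rw [key a.succ]
        rcases Fin.eq_castSucc_or_eq_last a.succ with ⟨b, hb⟩ | hb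
        · rw [hb, Fin.snoc_castSucc]
          exact c2 a b (by rw [← Fin.val_succ, hb]; simp)
        · rw [hb, Fin.snoc_last]
          show J.orderEmbOfFin hcJ a < k + 1
          have := (Finset.mem_Icc.mp (hJsub (Finset.orderEmbOfFin_mem J hcJ a))).2
          omega
    · rintro ⟨I, J⟩ hmem
      dsimp only
      rw [Finset.mem_filter] at hmem
      exact Prod.ext (Finset.insert_erase hmem.2) rfl
    · rintro ⟨I, J⟩ hmem
      dsimp only
      rw [mem_PPset] at hmem
      have hnot : k+1 ∉ I := fun hx => by
        have := (Finset.mem_Icc.mp (hmem.1.1 hx)).2; omega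
      exact Prod.ext (Finset.erase_insert hnot) rfl
    · rintro ⟨I, J⟩ hmem
      dsimp only
      rw [Finset.mem_filter] at hmem
      have := Finset.mul_prod_erase I h hmem.2
      simp only [wt]
      rw [← this]
      ring
  rw [← hsplit, hB, hA]
  ring

private lemma main_rec (g h : ℕ → ℝ) (q p : ℕ → ℝ[X]) (hq0 : q 0 = 0) (hp0 : p 0 = 1)
    (hq : ∀ k, q (k + 1) = q k + C (h (k + 1)) * p k)
    (hp : ∀ k, p (k + 1) = -(X * C (g (k + 1))) * q k + p k) (k : ℕ) :
    (∀ l, (p k).coeff l = (-1:ℝ)^l * ∑ IJ ∈ PPset k l, wt g h IJ) ∧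
    (∀ l, (q k).coeff l = (-1:ℝ)^l * ∑ IJ ∈ QQset k l, wt g h IJ) := by
  induction k with
  | zero =>
    constructor
    · intro l
      cases l with
      | zero => simp [hp0, PPset_zero, wt]
      | succ m => simp [hp0, PPset_base, Polynomial.coeff_one]
    · intro l
      simp [hq0, QQset_base]
  | succ k ih =>
    obtain ⟨ihp, ihq⟩ := ih
    constructor
    · intro l
      rw [hp k]
      cases l with
      | zero =>
        rw [Polynomial.coeff_add]
        have h1 : (-(X * C (g (k+1))) * q k).coeff 0 = 0 := by
          simp [Polynomial.mul_coeff_zero]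
        rw [h1, zero_add, ihp 0]
        simp [PPset_zero, wt]
      | succ m =>
        rw [Polynomial.coeff_add]
        have h1 : (-(X * C (g (k+1))) * q k).coeff (m+1) = -(g (k+1) * (q k).coeff m) := by
          rw [neg_mul, Polynomial.coeff_neg, mul_assoc, Polynomial.coeff_X_mul,
            Polynomial.coeff_C_mul]
        rw [h1, ihq m, ihp (m+1), sum_PPset_succ g h k m, pow_succ]
        ring
    · intro l
      rw [hq k, Polynomial.coeff_add, Polynomial.coeff_C_mul, ihq l, ihp l,
        sum_QQset_succ g h k l]
      ring

open scoped Classical in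
/-- The coefficient of `(-z)^l` in `p_k` equals the sum over interlacing pairs
`I, J ⊆ {1,…,k}` with `|I| = |J| = l`, `i_1 < j_1 < … < i_l < j_l`, of `h_I g_J`;
in particular `p_k(0) = 1`. -/
theorem stmt2 (g h : ℕ → ℝ) (q p : ℕ → ℝ[X])
    (hq0 : q 0 = 0) (hp0 : p 0 = 1)
    (hq : ∀ k, q (k + 1) = q k + C (h (k + 1)) * p k)
    (hp : ∀ k, p (k + 1) = -(X * C (g (k + 1))) * q k + p k)
    (k l : ℕ) :
    ((p k).coeff l = (-1 : ℝ) ^ l *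
      ∑ IJ ∈ ((Finset.Icc 1 k).powerset ×ˢ (Finset.Icc 1 k).powerset).filter
        (fun IJ => ∃ (hI : IJ.1.card = l) (hJ : IJ.2.card = l),
          (∀ a : Fin l, IJ.1.orderEmbOfFin hI a < IJ.2.orderEmbOfFin hJ a) ∧
          (∀ a b : Fin l, (a : ℕ) + 1 = (b : ℕ) →
            IJ.2.orderEmbOfFin hJ a < IJ.1.orderEmbOfFin hI b)),
        (∏ i ∈ IJ.1, h i) * (∏ j ∈ IJ.2, g j)) ∧
    (p k).eval 0 = 1 := by
  obtain ⟨hP, -⟩ := main_rec g h q p hq0 hp0 hq hp k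
  constructor
  · exact hP l
  · rw [← Polynomial.coeff_zero_eq_eval_zero, hP 0]
    simp [PPset_zero, wt]
end

section
/- For the recurrence with q_0 = 0, p_0 = 1 and q_k = q_{k-1} + h_k p_{k-1}, p_k = -z g_k q_{k-1} + p_{k-1}, the coefficient of (-z)^l in q_k equals the sum over pairs I ∈ C({1,…,k}, l+1), J ∈ C({1,…,k}, l) with i_1 < j_1 < i_2 < j_2 < … < i_l < j_l < i_{l+1} of the products h_I g_J. -/
/-!
Both `p_k` and `q_k` are governed by interlacing pairs: the coefficient of `(-z)^l` in `p_k` is the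
sum of `h_I g_J` over `I, J ⊆ {1,…,k}` with `i_1 < j_1 < ⋯ < i_l < j_l`. A pair inside
`{1,…,k+1}` either avoids `k+1`, or has `k+1` as its overall largest element, hence as the last
entry of `I` when `|I| = |J| + 1` and of `J` when `|I| = |J|`; removing it leaves an interlacing
pair of the other shape. The two sums therefore satisfy the recurrences defining `q_k` and `p_k`,
and induction on `k` proves both coefficient formulas at once.
-/

open Polynomial Finset

def Interlace {α : Type*} [LT α] {m n : ℕ} (f : Fin m → α) (g : Fin n → α) : Prop :=
  (∀ (a : Fin m) (b : Fin n), (a : ℕ) = b → f a < g b) ∧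
    (∀ (b : Fin n) (a : Fin m), (b : ℕ) + 1 = a → g b < f a)

namespace Interlace

variable {α : Type*} [Preorder α] {n : ℕ} {x : α}

theorem snoc_left_iff {f g : Fin n → α} (hg : ∀ b, g b < x) :
    Interlace (Fin.snoc f x : Fin (n + 1) → α) g ↔ Interlace f g := by
  constructor
  · rintro ⟨h1, h2⟩
    exact ⟨fun a b hab => by simpa using h1 a.castSucc b hab,
      fun b a hab => by simpa using h2 b a.castSucc hab⟩
  · rintro ⟨h1, h2⟩
    refine ⟨fun a b hab => ?_, fun b a hab => ?_⟩
    · cases a using Fin.lastCases with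
      | last => exact absurd hab (by simp [b.isLt.ne'])
      | cast a => simpa using h1 a b hab
    · cases a using Fin.lastCases with
      | last => simpa using hg b
      | cast a => simpa using h2 b a hab

theorem snoc_right_iff {f : Fin (n + 1) → α} {g : Fin n → α} (hf : ∀ a, f a < x) :
    Interlace f (Fin.snoc g x : Fin (n + 1) → α) ↔ Interlace f g := by
  constructor
  · rintro ⟨h1, h2⟩
    exact ⟨fun a b hab => by simpa using h1 a b.castSucc hab,
      fun b a hab => by simpa using h2 b.castSucc a hab⟩
  · rintro ⟨h1, h2⟩
    refine ⟨fun a b hab => ?_, fun b a hab => ?_⟩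
    · cases b using Fin.lastCases with
      | last => simpa using hf a
      | cast b => simpa using h1 a b hab
    · cases b using Fin.lastCases with
      | last => exact absurd hab (by simp [a.isLt.ne'])
      | cast b => simpa using h2 b a hab

theorem lt_succ {f : Fin (n + 1) → α} {g : Fin n → α} (h : Interlace f g) (b : Fin n) :
    g b < f b.succ :=
  h.2 b b.succ (Fin.val_succ b).symm

theorem lt {f g : Fin n → α} (h : Interlace f g) (a : Fin n) : f a < g a :=
  h.1 a a rfl

end Interlace

theorem Fin.strictMono_snoc {α : Type*} [Preorder α] {n : ℕ} {f : Fin n → α} {x : α}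
    (hf : StrictMono f) (hx : ∀ i, f i < x) : StrictMono (Fin.snoc f x : Fin (n + 1) → α) := by
  intro a b hab
  cases b using Fin.lastCases with
  | last =>
    obtain ⟨a, rfl⟩ := Fin.exists_castSucc_eq.2 hab.ne
    simpa using hx a
  | cast b =>
    obtain ⟨a, rfl⟩ := Fin.exists_castSucc_eq.2 (hab.trans (Fin.castSucc_lt_last b)).ne
    simpa using hf (Fin.castSucc_lt_castSucc_iff.1 hab)

namespace Finset

variable {α : Type*} [LinearOrder α] {s : Finset α} {x : α} {n : ℕ}

theorem orderEmbOfFin_insert_of_forall_lt (hs : s.card = n) (hx : ∀ y ∈ s, y < x)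
    (h : (insert x s).card = n + 1) :
    ⇑((insert x s).orderEmbOfFin h) = Fin.snoc (⇑(s.orderEmbOfFin hs)) x := by
  have hmono : StrictMono (Fin.snoc (⇑(s.orderEmbOfFin hs)) x : Fin (n + 1) → α) :=
    Fin.strictMono_snoc (s.orderEmbOfFin hs).strictMono fun i => hx _ (s.orderEmbOfFin_mem hs i)
  refine (orderEmbOfFin_unique h (fun i => ?_) hmono).symm
  cases i using Fin.lastCases with
  | last => simp
  | cast i => simp [s.orderEmbOfFin_mem hs i]

end Finset

section Interlaced

variable {α : Type*} [LinearOrder α] {I J : Finset α} {x : α} {n : ℕ}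

/-- `Interlaced (l + 1) l I J` is the relation `I < J` of the statement. -/
def Interlaced (m n : ℕ) (I J : Finset α) : Prop :=
  ∃ (hI : I.card = m) (hJ : J.card = n), Interlace (I.orderEmbOfFin hI) (J.orderEmbOfFin hJ)

theorem interlaced_zero_zero_iff : Interlaced 0 0 I J ↔ I = ∅ ∧ J = ∅ := by
  constructor
  · rintro ⟨hI, hJ, -⟩
    exact ⟨card_eq_zero.1 hI, card_eq_zero.1 hJ⟩
  · rintro ⟨rfl, rfl⟩
    exact ⟨rfl, rfl, fun a => a.elim0, fun b => b.elim0⟩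

theorem not_interlaced_empty_left {m : ℕ} : ¬Interlaced (m + 1) n ∅ J :=
  fun ⟨hI, _⟩ => by simp at hI

theorem not_interlaced_of_mem_right (hx : x ∈ J) (hI : ∀ z ∈ I, z ≤ x) :
    ¬Interlaced (n + 1) n I J := by
  rintro ⟨hI', hJ', h⟩
  obtain ⟨b, rfl⟩ : x ∈ Set.range (J.orderEmbOfFin hJ') := by simpa using hx
  exact (h.lt_succ b).not_ge (hI _ (I.orderEmbOfFin_mem hI' b.succ))

theorem not_interlaced_of_mem_left (hx : x ∈ I) (hJ : ∀ z ∈ J, z ≤ x) :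
    ¬Interlaced n n I J := by
  rintro ⟨hI', hJ', h⟩
  obtain ⟨a, rfl⟩ : x ∈ Set.range (I.orderEmbOfFin hI') := by simpa using hx
  exact (h.lt a).not_ge (hJ _ (J.orderEmbOfFin_mem hJ' a))

theorem interlaced_insert_left_iff (hI : ∀ y ∈ I, y < x) (hJ : ∀ y ∈ J, y < x) :
    Interlaced (n + 1) n (insert x I) J ↔ Interlaced n n I J := by
  have hcard : (insert x I).card = I.card + 1 := card_insert_of_notMem fun hx => (hI x hx).false
  constructor
  · rintro ⟨hI', hJ', h⟩
    have hIn : I.card = n := by omega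
    rw [orderEmbOfFin_insert_of_forall_lt hIn hI,
      Interlace.snoc_left_iff fun b => hJ _ (J.orderEmbOfFin_mem hJ' b)] at h
    exact ⟨hIn, hJ', h⟩
  · rintro ⟨hIn, hJ', h⟩
    have hI' : (insert x I).card = n + 1 := by omega
    refine ⟨hI', hJ', ?_⟩
    rwa [orderEmbOfFin_insert_of_forall_lt hIn hI,
      Interlace.snoc_left_iff fun b => hJ _ (J.orderEmbOfFin_mem hJ' b)]

theorem interlaced_insert_right_iff (hI : ∀ y ∈ I, y < x) (hJ : ∀ y ∈ J, y < x) :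
    Interlaced (n + 1) (n + 1) I (insert x J) ↔ Interlaced (n + 1) n I J := by
  have hcard : (insert x J).card = J.card + 1 := card_insert_of_notMem fun hx => (hJ x hx).false
  constructor
  · rintro ⟨hI', hJ', h⟩
    have hJn : J.card = n := by omega
    rw [orderEmbOfFin_insert_of_forall_lt hJn hJ,
      Interlace.snoc_right_iff fun a => hI _ (I.orderEmbOfFin_mem hI' a)] at h
    exact ⟨hI', hJn, h⟩
  · rintro ⟨hI', hJn, h⟩
    have hJ' : (insert x J).card = n + 1 := by omega
    refine ⟨hI', hJ', ?_⟩
    rwa [orderEmbOfFin_insert_of_forall_lt hJn hJ,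
      Interlace.snoc_right_iff fun a => hI _ (I.orderEmbOfFin_mem hI' a)]

end Interlaced

section InterlacedSum

open scoped Classical

variable {α R : Type*} [LinearOrder α] [CommSemiring R] (g h : α → R) {s : Finset α} {x : α}
  {n : ℕ}

noncomputable def interlacedSum (m n : ℕ) (s : Finset α) : R :=
  ∑ I ∈ s.powerset, ∑ J ∈ s.powerset,
    if Interlaced m n I J then (∏ i ∈ I, h i) * ∏ j ∈ J, g j else 0

theorem interlacedSum_zero_zero : interlacedSum g h 0 0 s = 1 := by
  simp [interlacedSum, interlaced_zero_zero_iff, ite_and]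

theorem interlacedSum_empty {m : ℕ} : interlacedSum g h (m + 1) n ∅ = 0 := by
  simp [interlacedSum, not_interlaced_empty_left]

theorem interlacedSum_insert_left (hx : ∀ y ∈ s, y < x) :
    interlacedSum g h (n + 1) n (insert x s)
      = interlacedSum g h (n + 1) n s + h x * interlacedSum g h n n s := by
  have hxs : x ∉ s := fun hxs => (hx x hxs).false
  simp only [interlacedSum, sum_powerset_insert hxs, ← sum_add_distrib, mul_sum]
  refine sum_congr rfl fun I hI => sum_congr rfl fun J hJ => ?_
  have hIx : ∀ y ∈ I, y < x := fun y hy => hx y (mem_powerset.1 hI hy)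
  have hJx : ∀ y ∈ J, y < x := fun y hy => hx y (mem_powerset.1 hJ hy)
  have hIx' : ∀ y ∈ insert x I, y ≤ x :=
    (forall_mem_insert _ _ _).2 ⟨le_rfl, fun y hy => (hIx y hy).le⟩
  rw [if_neg (not_interlaced_of_mem_right (mem_insert_self x J) fun y hy => (hIx y hy).le),
    if_neg (not_interlaced_of_mem_right (mem_insert_self x J) hIx'),
    interlaced_insert_left_iff hIx hJx, prod_insert fun hxI => (hIx x hxI).false]
  split_ifs <;> ring

theorem interlacedSum_insert_right (hx : ∀ y ∈ s, y < x) :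
    interlacedSum g h (n + 1) (n + 1) (insert x s)
      = interlacedSum g h (n + 1) (n + 1) s + g x * interlacedSum g h (n + 1) n s := by
  have hxs : x ∉ s := fun hxs => (hx x hxs).false
  simp only [interlacedSum, sum_powerset_insert hxs, ← sum_add_distrib, mul_sum]
  refine sum_congr rfl fun I hI => sum_congr rfl fun J hJ => ?_
  have hIx : ∀ y ∈ I, y < x := fun y hy => hx y (mem_powerset.1 hI hy)
  have hJx : ∀ y ∈ J, y < x := fun y hy => hx y (mem_powerset.1 hJ hy)
  have hJx' : ∀ y ∈ insert x J, y ≤ x :=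
    (forall_mem_insert _ _ _).2 ⟨le_rfl, fun y hy => (hJx y hy).le⟩
  rw [if_neg (not_interlaced_of_mem_left (mem_insert_self x I) fun y hy => (hJx y hy).le),
    if_neg (not_interlaced_of_mem_left (mem_insert_self x I) hJx'),
    interlaced_insert_right_iff hIx hJx, prod_insert fun hxJ => (hJx x hxJ).false]
  split_ifs <;> ring

end InterlacedSum

section Recurrence

variable {R : Type*} [CommRing R] (g h : ℕ → R) (q p : ℕ → R[X])

theorem coeff_eq_interlacedSum (hq0 : q 0 = 0) (hp0 : p 0 = 1)
    (hq : ∀ k, q (k + 1) = q k + C (h (k + 1)) * p k)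
    (hp : ∀ k, p (k + 1) = -(X * C (g (k + 1))) * q k + p k) (k : ℕ) :
    (∀ l, (p k).coeff l = (-1) ^ l * interlacedSum g h l l (Icc 1 k)) ∧
      ∀ l, (q k).coeff l = (-1) ^ l * interlacedSum g h (l + 1) l (Icc 1 k) := by
  induction k with
  | zero =>
    refine ⟨fun l => ?_, fun l => by simp [hq0, interlacedSum_empty]⟩
    cases l with
    | zero => simp [hp0, interlacedSum_zero_zero]
    | succ l => simp [hp0, coeff_one, interlacedSum_empty]
  | succ k ih =>
    obtain ⟨ihp, ihq⟩ := ih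
    have hIcc : Icc 1 (k + 1) = insert (k + 1) (Icc 1 k) :=
      (insert_Icc_right_eq_Icc_add_one (by omega)).symm
    have hlt : ∀ y ∈ Icc 1 k, y < k + 1 := fun y hy => Nat.lt_succ_of_le (mem_Icc.1 hy).2
    refine ⟨fun l => ?_, fun l => ?_⟩
    · cases l with
      | zero => simpa [hp, interlacedSum_zero_zero] using ihp 0
      | succ l =>
        have hcoeff :
            (p (k + 1)).coeff (l + 1) = (p k).coeff (l + 1) - g (k + 1) * (q k).coeff l := by
          rw [hp, mul_comm X, neg_mul, mul_assoc, coeff_add, coeff_neg, coeff_C_mul, coeff_X_mul]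
          ring
        rw [hcoeff, ihp, ihq, hIcc, interlacedSum_insert_right g h hlt]
        ring
    · have hcoeff : (q (k + 1)).coeff l = (q k).coeff l + h (k + 1) * (p k).coeff l := by
        rw [hq, coeff_add, coeff_C_mul]
      rw [hcoeff, ihp, ihq, hIcc, interlacedSum_insert_left g h hlt]
      ring

end Recurrence

open scoped Classical in
/-- The coefficient of `(-z)^l` in `q_k` equals the sum over interlacing pairs
`I ∈ C({1,…,k}, l+1)`, `J ∈ C({1,…,k}, l)` with
`i_1 < j_1 < … < i_l < j_l < i_{l+1}` of `h_I g_J`. -/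
theorem stmt3 (g h : ℕ → ℝ) (q p : ℕ → ℝ[X])
    (hq0 : q 0 = 0) (hp0 : p 0 = 1)
    (hq : ∀ k, q (k + 1) = q k + C (h (k + 1)) * p k)
    (hp : ∀ k, p (k + 1) = -(X * C (g (k + 1))) * q k + p k)
    (k l : ℕ) :
    (q k).coeff l = (-1 : ℝ) ^ l *
      ∑ IJ ∈ ((Finset.Icc 1 k).powerset ×ˢ (Finset.Icc 1 k).powerset).filter
        (fun IJ => ∃ (hI : IJ.1.card = l + 1) (hJ : IJ.2.card = l),
          (∀ (a : Fin (l + 1)) (b : Fin l), (a : ℕ) = (b : ℕ) →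
            IJ.1.orderEmbOfFin hI a < IJ.2.orderEmbOfFin hJ b) ∧
          (∀ (b : Fin l) (a : Fin (l + 1)), (b : ℕ) + 1 = (a : ℕ) →
            IJ.2.orderEmbOfFin hJ b < IJ.1.orderEmbOfFin hI a)),
        (∏ i ∈ IJ.1, h i) * (∏ j ∈ IJ.2, g j) := by
  rw [(coeff_eq_interlacedSum g h q p hq0 hp0 hq hp k).2 l, sum_filter, sum_product]
  -- the two `if`s differ only in their `Decidable` instances
  exact congrArg _ (sum_congr rfl fun I _ => sum_congr rfl fun J _ => if_congr Iff.rfl rfl rfl)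
end

section
/- Under the Poisson bracket on functions of (x_1,…,x_N, m_1,…,m_N, n_1,…,n_N) defined by {x_i, x_k} = sgn(x_i - x_k) and all other brackets among coordinates zero, the Hamiltonian H = 2∑_{1≤i<k≤N} m_i n_k e^{x_i - x_k} + ∑_{k=1}^N m_k n_k generates the flow ẋ_j = {x_j, H} = 2∑_{k<j} m_k n_j e^{x_k - x_j} + 2∑_{k>j} m_j n_k e^{x_j - x_k} + 4∑_{i<j<k} m_i n_k e^{x_i - x_k}, provided x_1 < x_2 < … < x_N. -/
/-!
With `E i k = m i * n k * exp (x i - x k)`, the partial derivative is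
`∂H/∂x_l = 2 ∑_{i<k} E i k (δ_{il} - δ_{kl})`, so the bracket equals
`2 ∑_{i<k} E i k (sgn (x_j - x_i) - sgn (x_j - x_k))`. For an increasing configuration the weight
of a pair `i < k` is `1` when one of `i, k` is `j`, `2` when `i < j < k`, and `0` otherwise.
-/

open Finset

section

variable {ι : Type*} [Fintype ι] [DecidableEq ι]

theorem hasDerivAt_sum_exp_sub_update (a : ι → ι → ℝ) (t : ι → Finset ι) (x : ι → ℝ) (l : ι) :
    HasDerivAt
      (fun s => ∑ i, ∑ k ∈ t i,
        a i k * Real.exp (Function.update x l s i - Function.update x l s k))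
      (∑ i, ∑ k ∈ t i, a i k * Real.exp (x i - x k) *
        ((Pi.single l 1 : ι → ℝ) i - (Pi.single l 1 : ι → ℝ) k)) (x l) := by
  have hupd := hasDerivAt_update x l (x l)
  refine HasDerivAt.fun_sum fun i _ => HasDerivAt.fun_sum fun k _ => ?_
  simpa [mul_assoc] using
    (((hasDerivAt_pi.mp hupd i).sub (hasDerivAt_pi.mp hupd k)).exp).const_mul (a i k)

theorem sum_mul_sum_sum_mul_single_sub_single (c : ι → ℝ) (F : ι → ι → ℝ) (t : ι → Finset ι) :
    ∑ l, c l * ∑ i, ∑ k ∈ t i, F i k * ((Pi.single l 1 : ι → ℝ) i - (Pi.single l 1 : ι → ℝ) k)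
      = ∑ i, ∑ k ∈ t i, F i k * (c i - c k) := by
  simp only [mul_sum]
  rw [sum_comm]
  refine sum_congr rfl fun i _ => ?_
  rw [sum_comm]
  refine sum_congr rfl fun k _ => ?_
  simp [Pi.single_apply, mul_sub, sum_sub_distrib]
  ring

end

section

variable {ι : Type*} [LinearOrder ι]

theorem sign_sub_sub_sign_sub_of_lt {x : ι → ℝ} (hx : StrictMono x) (j : ι) {i k : ι}
    (hik : i < k) :
    Real.sign (x j - x i) - Real.sign (x j - x k)
      = (if k = j then 1 else 0) + (if i = j then 1 else 0) + (if i < j ∧ j < k then 2 else 0) := by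
  have sign_eq : ∀ l, Real.sign (x j - x l) = if l < j then 1 else if l = j then 0 else -1 := by
    intro l
    rcases lt_trichotomy l j with h | rfl | h
    · simp [h, Real.sign_of_pos (sub_pos.mpr (hx h))]
    · simp
    · simp [h.ne', not_lt.mpr h.le, Real.sign_of_neg (sub_neg.mpr (hx h))]
  rw [sign_eq, sign_eq]
  split_ifs <;> grind

theorem sum_sum_lt_split_around [Fintype ι] (E : ι → ι → ℝ) (j : ι) :
    ∑ i, ∑ k ∈ univ.filter (i < ·), E i k *
        ((if k = j then 1 else 0) + (if i = j then 1 else 0) + (if i < j ∧ j < k then 2 else 0))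
      = ∑ k ∈ univ.filter (· < j), E k j + ∑ k ∈ univ.filter (j < ·), E j k
        + 2 * ∑ i ∈ univ.filter (· < j), ∑ k ∈ univ.filter (j < ·), E i k := by
  simp only [mul_add, sum_add_distrib]
  congr 1
  congr 1
  · simp [sum_filter]
  · simp [sum_filter]
  · simp only [sum_filter, mul_sum]
    refine sum_congr rfl fun i _ => ?_
    by_cases hi : i < j
    · simp only [hi, true_and, if_true, mul_sum]
      refine sum_congr rfl fun k _ => ?_
      split_ifs <;> first | order | ring
    · simp [hi]

end

theorem stmt5_general (N : ℕ) (x m n : Fin N → ℝ)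
    (hx : StrictMono x) (j : Fin N)
    (H : (Fin N → ℝ) → ℝ)
    (hH : H = fun y => 2 * ∑ i, ∑ k ∈ Finset.univ.filter (fun k => i < k),
        m i * n k * Real.exp (y i - y k) + ∑ k, m k * n k) :
    ∑ k, Real.sign (x j - x k) * deriv (fun s => H (Function.update x k s)) (x k)
      = 2 * ∑ k ∈ Finset.univ.filter (fun k => k < j), m k * n j * Real.exp (x k - x j)
      + 2 * ∑ k ∈ Finset.univ.filter (fun k => j < k), m j * n k * Real.exp (x j - x k)
      + 4 * ∑ i ∈ Finset.univ.filter (fun i => i < j),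
            ∑ k ∈ Finset.univ.filter (fun k => j < k),
              m i * n k * Real.exp (x i - x k) := by
  have hderiv : ∀ l, deriv (fun s => H (Function.update x l s)) (x l)
      = 2 * ∑ i, ∑ k ∈ univ.filter (i < ·), m i * n k * Real.exp (x i - x k)
          * ((Pi.single l 1 : Fin N → ℝ) i - (Pi.single l 1 : Fin N → ℝ) k) := fun l => by
    subst hH
    exact (((hasDerivAt_sum_exp_sub_update (fun i k => m i * n k) _ x l).const_mul 2).add_const
      _).deriv
  simp only [hderiv, mul_left_comm _ (2 : ℝ), ← mul_sum, sum_mul_sum_sum_mul_single_sub_single]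
  rw [sum_congr rfl fun i _ => sum_congr rfl fun k hk =>
      congrArg _ (sign_sub_sub_sign_sub_of_lt hx j (mem_filter.mp hk).2),
    sum_sum_lt_split_around]
  ring

/-- The Hamiltonian `H = 2∑_{i<k} m_i n_k e^{x_i - x_k} + ∑_k m_k n_k` generates the flow
`ẋ_j = {x_j, H} = ∑_k sgn(x_j - x_k) ∂H/∂x_k
  = 2∑_{k<j} m_k n_j e^{x_k-x_j} + 2∑_{k>j} m_j n_k e^{x_j-x_k} + 4∑_{i<j<k} m_i n_k e^{x_i-x_k}`,
provided `x_1 < x_2 < … < x_N`. -/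
theorem stmt5 (N : ℕ) (x m n : Fin N → ℝ)
    (hm : ∀ i, 0 < m i) (hn : ∀ i, 0 < n i)
    (hx : StrictMono x) (j : Fin N)
    (H : (Fin N → ℝ) → ℝ)
    (hH : H = fun y => 2 * ∑ i, ∑ k ∈ Finset.univ.filter (fun k => i < k),
        m i * n k * Real.exp (y i - y k) + ∑ k, m k * n k) :
    ∑ k, Real.sign (x j - x k) * deriv (fun s => H (Function.update x k s)) (x k)
      = 2 * ∑ k ∈ Finset.univ.filter (fun k => k < j), m k * n j * Real.exp (x k - x j)
      + 2 * ∑ k ∈ Finset.univ.filter (fun k => j < k), m j * n k * Real.exp (x j - x k)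
      + 4 * ∑ i ∈ Finset.univ.filter (fun i => i < j),
            ∑ k ∈ Finset.univ.filter (fun k => j < k),
              m i * n k * Real.exp (x i - x k) :=
  stmt5_general N x m n hx j H hH
end

section
/- Let A = [[-1, λm],[-λn, 1]] and V = [[4λ^{-2} + Q, -2λ^{-1}a - λmQ],[2λ^{-1}b + λnQ, -Q]] where a = u - u_x, b = v + v_x, Q = ab, m = u - u_xx, n = v - v_xx, for smooth functions u, v of (x,t) and λ ≠ 0. Then the zero-curvature equation ∂_t A - ∂_x V + (1/2)[A, V] = 0 is equivalent to the 2-mCH system m_t + ((u - u_x)(v + v_x) m)_x = 0 and n_t + ((u - u_x)(v + v_x) n)_x = 0 together with the defining relations m = u - u_xx, n = v - v_xx. -/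
noncomputable def Dv (w : ℝ × ℝ) (f : ℝ × ℝ → ℝ) : ℝ × ℝ → ℝ := fun p => fderiv ℝ f p w

lemma Dv_contDiff {f : ℝ × ℝ → ℝ} (hf : ContDiff ℝ (⊤ : ℕ∞) f) (w : ℝ × ℝ) :
    ContDiff ℝ (⊤ : ℕ∞) (Dv w f) :=
  (hf.fderiv_right (by simp)).clm_apply contDiff_const

lemma hasDerivAt_line_x {f : ℝ × ℝ → ℝ} (hf : Differentiable ℝ f) (p : ℝ × ℝ) :
    HasDerivAt (fun s => f (s, p.2)) (Dv (1, 0) f p) p.1 :=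
  ((hf p).hasFDerivAt).comp_hasDerivAt p.1
      ((hasDerivAt_id p.1).prodMk (hasDerivAt_const p.1 p.2))

lemma hasDerivAt_line_t {f : ℝ × ℝ → ℝ} (hf : Differentiable ℝ f) (p : ℝ × ℝ) :
    HasDerivAt (fun s => f (p.1, s)) (Dv (0, 1) f p) p.2 :=
  ((hf p).hasFDerivAt).comp_hasDerivAt p.2
      ((hasDerivAt_const p.2 p.1).prodMk (hasDerivAt_id p.2))

lemma Dv_sub {f g : ℝ × ℝ → ℝ} (hf : Differentiable ℝ f) (hg : Differentiable ℝ g)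
    (w p) : Dv w (fun q => f q - g q) p = Dv w f p - Dv w g p := by
  simp [Dv, fderiv_fun_sub (hf p) (hg p)]

lemma Dv_add {f g : ℝ × ℝ → ℝ} (hf : Differentiable ℝ f) (hg : Differentiable ℝ g)
    (w p) : Dv w (fun q => f q + g q) p = Dv w f p + Dv w g p := by
  simp [Dv, fderiv_fun_add (hf p) (hg p)]

lemma Dv_mul {f g : ℝ × ℝ → ℝ} (hf : Differentiable ℝ f) (hg : Differentiable ℝ g)
    (w p) : Dv w (fun q => f q * g q) p = Dv w f p * g p + f p * Dv w g p := by
  simp [Dv, fderiv_fun_mul (hf p) (hg p)]; ring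

lemma Dv_const_mul {f : ℝ × ℝ → ℝ} (hf : Differentiable ℝ f) (c : ℝ)
    (w p) : Dv w (fun q => c * f q) p = c * Dv w f p := by
  simp [Dv, fderiv_const_mul (hf p)]

lemma Dv_const_add (f : ℝ × ℝ → ℝ) (c : ℝ)
    (w p) : Dv w (fun q => c + f q) p = Dv w f p := by
  simp [Dv, fderiv_const_add]

lemma Dv_neg (f : ℝ × ℝ → ℝ) (w p) : Dv w (fun q => -f q) p = -(Dv w f p) := by
  simp [Dv, fderiv_neg]

/-- Zero-curvature formulation of the 2-mCH: with
`A = [[-1, λm], [-λn, 1]]`, `V = [[4λ⁻² + Q, -2λ⁻¹ a - λ m Q], [2λ⁻¹ b + λ n Q, -Q]]`,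
`a = u - u_x`, `b = v + v_x`, `Q = ab`, `m = u - u_xx`, `n = v - v_xx`, the equation
`∂ₜ A - ∂ₓ V + ½[A, V] = 0` is equivalent to
`m_t + ((u-u_x)(v+v_x) m)_x = 0` and `n_t + ((u-u_x)(v+v_x) n)_x = 0`. -/
theorem stmt19 (u v : ℝ × ℝ → ℝ)
    (hu : ContDiff ℝ (⊤ : ℕ∞) u) (hv : ContDiff ℝ (⊤ : ℕ∞) v)
    (lam : ℝ) (hlam : lam ≠ 0)
    (dx dt : (ℝ × ℝ → ℝ) → (ℝ × ℝ → ℝ))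
    (hdx : ∀ f p, dx f p = deriv (fun s => f (s, p.2)) p.1)
    (hdt : ∀ f p, dt f p = deriv (fun s => f (p.1, s)) p.2)
    (m n a b Q : ℝ × ℝ → ℝ)
    (hm : m = fun p => u p - dx (dx u) p)
    (hn : n = fun p => v p - dx (dx v) p)
    (ha : a = fun p => u p - dx u p)
    (hb : b = fun p => v p + dx v p)
    (hQ : Q = fun p => a p * b p)
    (A V : ℝ × ℝ → Matrix (Fin 2) (Fin 2) ℝ)
    (hA : ∀ p, A p = !![-1, lam * m p; -(lam * n p), 1])
    (hV : ∀ p, V p = !![4 / lam ^ 2 + Q p, -(2 / lam) * a p - lam * m p * Q p;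
                        (2 / lam) * b p + lam * n p * Q p, -(Q p)]) :
    (∀ p (i j : Fin 2),
        dt (fun q => A q i j) p - dx (fun q => V q i j) p
          + (1 / 2) * ((A p * V p - V p * A p) i j) = 0)
      ↔ (∀ p, dt m p + dx (fun q => Q q * m q) p = 0 ∧
              dt n p + dx (fun q => Q q * n q) p = 0) := by
  have hud : Differentiable ℝ u := hu.differentiable (by simp)
  have hvd : Differentiable ℝ v := hv.differentiable (by simp)
  have ddx : ∀ f : ℝ × ℝ → ℝ, Differentiable ℝ f → ∀ p, dx f p = Dv (1,0) f p := by
    intro f hf p; rw [hdx]; exact (hasDerivAt_line_x hf p).deriv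
  have ddt : ∀ f : ℝ × ℝ → ℝ, Differentiable ℝ f → ∀ p, dt f p = Dv (0,1) f p := by
    intro f hf p; rw [hdt]; exact (hasDerivAt_line_t hf p).deriv
  have hux : ContDiff ℝ (⊤ : ℕ∞) (Dv (1,0) u) := Dv_contDiff hu _
  have huxx : ContDiff ℝ (⊤ : ℕ∞) (Dv (1,0) (Dv (1,0) u)) := Dv_contDiff hux _
  have hvx : ContDiff ℝ (⊤ : ℕ∞) (Dv (1,0) v) := Dv_contDiff hv _
  have hvxx : ContDiff ℝ (⊤ : ℕ∞) (Dv (1,0) (Dv (1,0) v)) := Dv_contDiff hvx _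
  have hdxu : dx u = Dv (1,0) u := funext (ddx u hud)
  have hdxv : dx v = Dv (1,0) v := funext (ddx v hvd)
  have hm' : m = fun p => u p - Dv (1,0) (Dv (1,0) u) p := by
    rw [hm, hdxu]; funext p; rw [ddx _ (hux.differentiable (by simp))]
  have hn' : n = fun p => v p - Dv (1,0) (Dv (1,0) v) p := by
    rw [hn, hdxv]; funext p; rw [ddx _ (hvx.differentiable (by simp))]
  have ha' : a = fun p => u p - Dv (1,0) u p := by rw [ha, hdxu]
  have hb' : b = fun p => v p + Dv (1,0) v p := by rw [hb, hdxv]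
  have hmC : ContDiff ℝ (⊤ : ℕ∞) m := by rw [hm']; exact hu.sub huxx
  have hnC : ContDiff ℝ (⊤ : ℕ∞) n := by rw [hn']; exact hv.sub hvxx
  have haC : ContDiff ℝ (⊤ : ℕ∞) a := by rw [ha']; exact hu.sub hux
  have hbC : ContDiff ℝ (⊤ : ℕ∞) b := by rw [hb']; exact hv.add hvx
  have hQC : ContDiff ℝ (⊤ : ℕ∞) Q := by rw [hQ]; exact haC.mul hbC
  have hmd : Differentiable ℝ m := hmC.differentiable (by simp)
  have hnd : Differentiable ℝ n := hnC.differentiable (by simp)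
  have had : Differentiable ℝ a := haC.differentiable (by simp)
  have hbd : Differentiable ℝ b := hbC.differentiable (by simp)
  have hQd : Differentiable ℝ Q := hQC.differentiable (by simp)
  have hQmd : Differentiable ℝ (fun q => Q q * m q) := hQd.mul hmd
  have hQnd : Differentiable ℝ (fun q => Q q * n q) := hQd.mul hnd
  -- key structural identities
  have hax : ∀ p, Dv (1,0) a p = m p - a p := by
    intro p
    simp only [ha', Dv_sub hud (hux.differentiable (by simp)), hm']
    ring
  have hbx : ∀ p, Dv (1,0) b p = b p - n p := by
    intro p
    simp only [hb', Dv_add hvd (hvx.differentiable (by simp)), hn']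
    ring
  have hQx : ∀ p, Dv (1,0) Q p = m p * b p - n p * a p := by
    intro p
    simp only [hQ, Dv_mul had hbd, hax, hbx]
    ring
  -- entry functions
  have fA00 : (fun q => A q 0 0) = fun _ => (-1 : ℝ) := funext fun q => by rw [hA q]; simp
  have fA01 : (fun q => A q 0 1) = fun q => lam * m q := funext fun q => by rw [hA q]; simp
  have fA10 : (fun q => A q 1 0) = fun q => -(lam * n q) := funext fun q => by rw [hA q]; simp
  have fA11 : (fun q => A q 1 1) = fun _ => (1 : ℝ) := funext fun q => by rw [hA q]; simp
  have fV00 : (fun q => V q 0 0) = fun q => 4 / lam ^ 2 + Q q := funext fun q => by rw [hV q]; simp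
  have fV01 : (fun q => V q 0 1) = fun q => (-(2 / lam)) * a q - lam * (Q q * m q) :=
    funext fun q => by rw [hV q]; simp; ring
  have fV10 : (fun q => V q 1 0) = fun q => (2 / lam) * b q + lam * (Q q * n q) :=
    funext fun q => by rw [hV q]; simp; ring
  have fV11 : (fun q => V q 1 1) = fun q => -(Q q) := funext fun q => by rw [hV q]; simp
  -- commutator entries
  have hc00 : ∀ p, (A p * V p - V p * A p) 0 0 = 2 * (m p * b p - n p * a p) := by
    intro p; rw [hA p, hV p]
    simp [Matrix.mul_apply, Fin.sum_univ_two]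
    field_simp
    ring
  have hc01 : ∀ p, (A p * V p - V p * A p) 0 1 = (4 / lam) * (a p - m p) := by
    intro p; rw [hA p, hV p]
    simp [Matrix.mul_apply, Fin.sum_univ_two]
    field_simp
    ring
  have hc10 : ∀ p, (A p * V p - V p * A p) 1 0 = (4 / lam) * (b p - n p) := by
    intro p; rw [hA p, hV p]
    simp [Matrix.mul_apply, Fin.sum_univ_two]
    field_simp
    ring
  have hc11 : ∀ p, (A p * V p - V p * A p) 1 1 = 2 * (n p * a p - m p * b p) := by
    intro p; rw [hA p, hV p]
    simp [Matrix.mul_apply, Fin.sum_univ_two]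
    field_simp
    ring
  -- derivative of a constant function
  have dconst : ∀ (c : ℝ) p, dt (fun _ : ℝ × ℝ => c) p = 0 := by
    intro c p; rw [hdt]; simp
  -- the four entry equations
  have eq00 : ∀ p, dt (fun q => A q 0 0) p - dx (fun q => V q 0 0) p
      + (1 / 2) * ((A p * V p - V p * A p) 0 0) = 0 := by
    intro p
    rw [fA00, fV00, dconst, hc00,
      ddx _ ((differentiable_const _).fun_add hQd),
      Dv_const_add, hQx]
    ring
  have eq11 : ∀ p, dt (fun q => A q 1 1) p - dx (fun q => V q 1 1) p
      + (1 / 2) * ((A p * V p - V p * A p) 1 1) = 0 := by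
    intro p
    rw [fA11, fV11, dconst, hc11, ddx _ hQd.fun_neg, Dv_neg, hQx]
    ring
  have eq01 : ∀ p, dt (fun q => A q 0 1) p - dx (fun q => V q 0 1) p
      + (1 / 2) * ((A p * V p - V p * A p) 0 1)
      = lam * (dt m p + dx (fun q => Q q * m q) p) := by
    intro p
    rw [fA01, fV01, hc01,
      ddt _ (hmd.const_mul lam), Dv_const_mul hmd,
      ddx _ ((had.const_mul _).fun_sub (hQmd.const_mul lam)),
      Dv_sub (had.const_mul _) (hQmd.const_mul lam),
      Dv_const_mul had, Dv_const_mul hQmd, hax,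
      ddt m hmd, ddx _ hQmd]
    ring
  have eq10 : ∀ p, dt (fun q => A q 1 0) p - dx (fun q => V q 1 0) p
      + (1 / 2) * ((A p * V p - V p * A p) 1 0)
      = -(lam * (dt n p + dx (fun q => Q q * n q) p)) := by
    intro p
    have : (fun q => -(lam * n q)) = fun q => (-lam) * n q := funext fun q => by ring
    rw [fA10, fV10, hc10, this,
      ddt _ (hnd.const_mul (-lam)), Dv_const_mul hnd,
      ddx _ ((hbd.const_mul _).fun_add (hQnd.const_mul lam)),
      Dv_add (hbd.const_mul _) (hQnd.const_mul lam),
      Dv_const_mul hbd, Dv_const_mul hQnd, hbx,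
      ddt n hnd, ddx _ hQnd]
    ring
  constructor
  · intro h p
    have h01 := h p 0 1
    rw [eq01 p] at h01
    have h10 := h p 1 0
    rw [eq10 p] at h10
    constructor
    · rcases mul_eq_zero.mp h01 with h' | h'
      · exact absurd h' hlam
      · exact h'
    · rcases mul_eq_zero.mp (neg_eq_zero.mp h10) with h' | h'
      · exact absurd h' hlam
      · exact h'
  · intro h p i j
    fin_cases i <;> fin_cases j
    · exact eq00 p
    · exact (eq01 p).trans (by rw [(h p).1, mul_zero])
    · exact (eq10 p).trans (by rw [(h p).2, mul_zero, neg_zero])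
    · exact eq11 p
end
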